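/- Let n ≥ 2 and suppose a pure curvature operator on a 4n-dimensional oriented inner product space has eigenvalues λᵢⱼ = −c₁ if i, j ∈ {1,…,2n}, λᵢⱼ = −c₂ if i, j ∈ {2n+1,…,4n}, and λᵢⱼ = 0 otherwise, with c₁, c₂ nonzero. If I ⊆ {1,…,4n} is a 2n-subset containing an odd number r of indices from {1,…,2n}, then haf(I) = haf(Iᶜ) = 0; if r = 2s is even, then haf(I) = haf(Iᶜ) holds if and only if c₁ˢ c₂^{n−s} = c₁^{n−s} c₂ˢ. -/

import Mathlib

open Finset Equiv

/-- The hafnian of the principal submatrix of `lam` indexed by the 2n-subset enumerated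
by `f : Fin 2n → Fin 4n`: haf = (1/(2ⁿ n!)) Σ_{σ ∈ S_{2n}} Π_{k<n} λ(f(σ(2k)), f(σ(2k+1))),
the sum over all perfect matchings of the index set. -/
noncomputable def hafSub (n : ℕ) (lam : Fin (4 * n) → Fin (4 * n) → ℝ)
    (f : Fin (2 * n) → Fin (4 * n)) : ℝ :=
  (1 / ((2 : ℝ) ^ n * (Nat.factorial n : ℝ))) *
    ∑ σ : Equiv.Perm (Fin (2 * n)), ∏ k : Fin n,
      lam (f (σ ⟨2 * k.val, by have := k.isLt; omega⟩))
          (f (σ ⟨2 * k.val + 1, by have := k.isLt; omega⟩))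

private def dk {n : ℕ} (k : Fin n) : Fin (2 * n) := ⟨2 * k.val, by have := k.isLt; omega⟩
private def dk' {n : ℕ} (k : Fin n) : Fin (2 * n) := ⟨2 * k.val + 1, by have := k.isLt; omega⟩

private noncomputable def pe (n : ℕ) : Fin n × Fin 2 ≃ Fin (2 * n) :=
  Equiv.ofBijective
    (fun x => ⟨2 * x.1.val + x.2.val, by have := x.1.isLt; have := x.2.isLt; omega⟩)
    (by
      rw [Fintype.bijective_iff_injective_and_card]
      constructor
      · rintro ⟨a, b⟩ ⟨c, d⟩ h
        simp only [Fin.mk.injEq] at h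
        have hb := b.isLt; have hd := d.isLt
        have hh : a.val = c.val ∧ b.val = d.val := by omega
        exact Prod.ext (Fin.ext hh.1) (Fin.ext hh.2)
      · simp [mul_comm])

private lemma sum_pairs {n : ℕ} {M : Type*} [AddCommMonoid M] (F : Fin (2 * n) → M) :
    ∑ j, F j = ∑ k : Fin n, (F (dk k) + F (dk' k)) := by
  rw [← Equiv.sum_comp (pe n) F, Fintype.sum_prod_type]
  refine Finset.sum_congr rfl fun k _ => ?_
  rw [Fin.sum_univ_two]
  rfl

private def good (n : ℕ) (p : Fin (2 * n) → Prop) [DecidablePred p] :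
    Finset (Equiv.Perm (Fin (2 * n))) :=
  univ.filter fun σ => ∀ k : Fin n, (p (σ (dk k)) ↔ p (σ (dk' k)))

private lemma term_zero {n : ℕ} {p : Fin (2 * n) → Prop} [DecidablePred p]
    {v : Fin (2 * n) → Fin (2 * n) → ℝ} {c₁ c₂ : ℝ}
    (hv : ∀ a b, v a b = if p a ∧ p b then -c₁ else if ¬ p a ∧ ¬ p b then -c₂ else 0)
    {σ : Equiv.Perm (Fin (2 * n))} (hσ : σ ∉ good n p) :
    (∏ k : Fin n, v (σ (dk k)) (σ (dk' k))) = 0 := by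
  simp only [good, mem_filter, mem_univ, true_and, not_forall] at hσ
  obtain ⟨k, hk⟩ := hσ
  refine Finset.prod_eq_zero (mem_univ k) ?_
  rw [hv]
  by_cases h1 : p (σ (dk k)) <;> by_cases h2 : p (σ (dk' k)) <;>
    simp [h1, h2] at hk ⊢

private lemma good_card {n : ℕ} {p : Fin (2 * n) → Prop} [DecidablePred p]
    {σ : Equiv.Perm (Fin (2 * n))} (hσ : σ ∈ good n p) :
    2 * (univ.filter fun k : Fin n => p (σ (dk k))).card = (univ.filter p).card := by
  have h1 : (univ.filter p).card = (univ.filter fun j => p (σ j)).card := by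
    refine (Finset.card_nbij' (fun j => σ j) (fun j => σ.symm j) ?_ ?_ ?_ ?_).symm
    · intro j hj; simp only [mem_coe, mem_filter, mem_univ, true_and] at hj ⊢; exact hj
    · intro j hj; simp only [mem_filter, mem_univ, true_and] at hj ⊢; simpa using hj
    · intro j _; simp
    · intro j _; simp
  rw [h1, Finset.card_filter, Finset.card_filter,
    sum_pairs (fun j => if p (σ j) then 1 else 0), Finset.mul_sum]
  simp only [good, mem_filter, mem_univ, true_and] at hσ
  refine Finset.sum_congr rfl fun k _ => ?_
  by_cases h : p (σ (dk k))
  · have h' := (hσ k).mp h; simp [h, h']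
  · have h' : ¬ p (σ (dk' k)) := fun hh => h ((hσ k).mpr hh)
    simp [h, h']

private lemma term_good {n : ℕ} {p : Fin (2 * n) → Prop} [DecidablePred p]
    {v : Fin (2 * n) → Fin (2 * n) → ℝ} {c₁ c₂ : ℝ}
    (hv : ∀ a b, v a b = if p a ∧ p b then -c₁ else if ¬ p a ∧ ¬ p b then -c₂ else 0)
    {σ : Equiv.Perm (Fin (2 * n))} (hσ : σ ∈ good n p) :
    (∏ k : Fin n, v (σ (dk k)) (σ (dk' k))) =
      (-c₁) ^ (univ.filter fun k : Fin n => p (σ (dk k))).card *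
      (-c₂) ^ (n - (univ.filter fun k : Fin n => p (σ (dk k))).card) := by
  simp only [good, mem_filter, mem_univ, true_and] at hσ
  have hval : ∀ k : Fin n, v (σ (dk k)) (σ (dk' k)) =
      if p (σ (dk k)) then -c₁ else -c₂ := by
    intro k; rw [hv]
    by_cases h : p (σ (dk k))
    · simp [h, (hσ k).mp h]
    · have h' : ¬ p (σ (dk' k)) := fun hh => h ((hσ k).mpr hh)
      simp [h, h']
  rw [Finset.prod_congr rfl (fun k _ => hval k), Finset.prod_ite,
    Finset.prod_const, Finset.prod_const]
  congr 1
  rw [Finset.filter_not, Finset.card_sdiff_of_subset (Finset.filter_subset _ _),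
    Finset.card_univ, Fintype.card_fin]

private lemma sum_eval {n : ℕ} {p : Fin (2 * n) → Prop} [DecidablePred p]
    {v : Fin (2 * n) → Fin (2 * n) → ℝ} {c₁ c₂ : ℝ}
    (hv : ∀ a b, v a b = if p a ∧ p b then -c₁ else if ¬ p a ∧ ¬ p b then -c₂ else 0)
    (t : ℕ) (ht : (univ.filter p).card = 2 * t) :
    ∑ σ : Equiv.Perm (Fin (2 * n)), ∏ k : Fin n, v (σ (dk k)) (σ (dk' k)) =
      (good n p).card * ((-c₁) ^ t * (-c₂) ^ (n - t)) := by
  have key : ∀ σ : Equiv.Perm (Fin (2 * n)),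
      (∏ k : Fin n, v (σ (dk k)) (σ (dk' k))) =
        if σ ∈ good n p then (-c₁) ^ t * (-c₂) ^ (n - t) else 0 := by
    intro σ
    by_cases hσ : σ ∈ good n p
    · have hc := good_card hσ
      have hct : (univ.filter fun k : Fin n => p (σ (dk k))).card = t := by omega
      rw [term_good hv hσ, hct, if_pos hσ]
    · rw [term_zero hv hσ, if_neg hσ]
  rw [Finset.sum_congr rfl (fun σ _ => key σ), Finset.sum_ite_mem, Finset.univ_inter,
    Finset.sum_const, nsmul_eq_mul]

private lemma sum_odd {n : ℕ} {p : Fin (2 * n) → Prop} [DecidablePred p]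
    {v : Fin (2 * n) → Fin (2 * n) → ℝ} {c₁ c₂ : ℝ}
    (hv : ∀ a b, v a b = if p a ∧ p b then -c₁ else if ¬ p a ∧ ¬ p b then -c₂ else 0)
    (hodd : Odd (univ.filter p).card) :
    ∑ σ : Equiv.Perm (Fin (2 * n)), ∏ k : Fin n, v (σ (dk k)) (σ (dk' k)) = 0 := by
  refine Finset.sum_eq_zero fun σ _ => ?_
  by_cases hσ : σ ∈ good n p
  · exfalso
    have := good_card hσ
    rw [Nat.odd_iff] at hodd
    omega
  · exact term_zero hv hσ

private lemma good_comp {n : ℕ} (p : Fin (2 * n) → Prop) [DecidablePred p]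
    (π : Equiv.Perm (Fin (2 * n))) :
    (good n fun j => p (π j)).card = (good n p).card := by
  refine Finset.card_nbij' (fun σ => π * σ) (fun τ => π⁻¹ * τ) ?_ ?_ ?_ ?_
  · intro σ hσ
    simp only [good, mem_coe, mem_filter, mem_univ, true_and] at hσ ⊢
    intro k
    simpa [Equiv.Perm.mul_apply] using hσ k
  · intro τ hτ
    simp only [good, mem_coe, mem_filter, mem_univ, true_and] at hτ ⊢
    intro k
    simpa [Equiv.Perm.mul_apply] using hτ k
  · intro σ _; group
  · intro τ _; group

private lemma good_neg {n : ℕ} (p : Fin (2 * n) → Prop) [DecidablePred p] :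
    good n (fun j => ¬ p j) = good n p := by
  unfold good
  ext σ
  simp only [mem_filter, mem_univ, true_and, not_iff_not]

private lemma good_congr {n : ℕ} {p q : Fin (2 * n) → Prop} [DecidablePred p] [DecidablePred q]
    (h : ∀ j, p j ↔ q j) : good n p = good n q := by
  unfold good
  ext σ
  simp only [mem_filter, mem_univ, true_and]
  constructor <;> intro hσ k
  · rw [← h, ← h]; exact hσ k
  · rw [h, h]; exact hσ k

private lemma card_filter_lt (m a : ℕ) (h : a ≤ m) :
    (univ.filter (fun j : Fin m => j.val < a)).card = a := by
  have heq : univ.filter (fun j : Fin m => j.val < a) =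
      Finset.map ⟨fun i : Fin a => ⟨i.val, lt_of_lt_of_le i.isLt h⟩,
        fun i j hij => Fin.ext (by simpa using congrArg Fin.val hij)⟩ univ := by
    ext j
    simp only [mem_filter, mem_univ, true_and, Finset.mem_map, Function.Embedding.coeFn_mk]
    constructor
    · intro hj; exact ⟨⟨j.val, hj⟩, Fin.ext rfl⟩
    · rintro ⟨i, -, rfl⟩; exact i.isLt
  rw [heq, Finset.card_map, Finset.card_univ, Fintype.card_fin]

private lemma sigma_pos {n t : ℕ} (p : Fin (2 * n) → Prop) [DecidablePred p]
    (e₁ : {j : Fin (2 * n) // j.val < 2 * t} ≃ {j : Fin (2 * n) // p j})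
    (e₂ : {j : Fin (2 * n) // ¬ j.val < 2 * t} ≃ {j : Fin (2 * n) // ¬ p j})
    (j : Fin (2 * n)) (h : j.val < 2 * t) :
    ((Equiv.sumCompl (fun j : Fin (2 * n) => j.val < 2 * t)).symm.trans
      ((e₁.sumCongr e₂).trans (Equiv.sumCompl p))) j = (e₁ ⟨j, h⟩).val := by
  have e := Equiv.sumCompl_symm_apply_of_pos (p := fun j : Fin (2 * n) => j.val < 2 * t) (a := j) h
  simp only [Equiv.trans_apply, e, Equiv.sumCongr_apply, Sum.map_inl, Equiv.sumCompl_apply_inl]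

private lemma sigma_neg {n t : ℕ} (p : Fin (2 * n) → Prop) [DecidablePred p]
    (e₁ : {j : Fin (2 * n) // j.val < 2 * t} ≃ {j : Fin (2 * n) // p j})
    (e₂ : {j : Fin (2 * n) // ¬ j.val < 2 * t} ≃ {j : Fin (2 * n) // ¬ p j})
    (j : Fin (2 * n)) (h : ¬ j.val < 2 * t) :
    ((Equiv.sumCompl (fun j : Fin (2 * n) => j.val < 2 * t)).symm.trans
      ((e₁.sumCongr e₂).trans (Equiv.sumCompl p))) j = (e₂ ⟨j, h⟩).val := by
  have e := Equiv.sumCompl_symm_apply_of_neg (p := fun j : Fin (2 * n) => j.val < 2 * t) (a := j) h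
  simp only [Equiv.trans_apply, e, Equiv.sumCongr_apply, Sum.map_inr, Equiv.sumCompl_apply_inr]

private lemma good_nonempty {n : ℕ} (p : Fin (2 * n) → Prop) [DecidablePred p]
    (t : ℕ) (ht : (univ.filter p).card = 2 * t) : (good n p).Nonempty := by
  have ht2n : 2 * t ≤ 2 * n := by
    rw [← ht]
    simpa using Finset.card_filter_le univ p
  have hcard1 : Fintype.card {j : Fin (2 * n) // j.val < 2 * t} = 2 * t := by
    rw [Fintype.card_subtype, card_filter_lt _ _ ht2n]
  have hcardp : Fintype.card {j : Fin (2 * n) // p j} = 2 * t := by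
    rw [Fintype.card_subtype, ht]
  have hcard1' : Fintype.card {j : Fin (2 * n) // ¬ j.val < 2 * t} =
      Fintype.card {j : Fin (2 * n) // ¬ p j} := by
    rw [Fintype.card_subtype_compl, Fintype.card_subtype_compl, hcard1, hcardp]
  let e₁ : {j : Fin (2 * n) // j.val < 2 * t} ≃ {j : Fin (2 * n) // p j} :=
    Fintype.equivOfCardEq (by rw [hcard1, hcardp])
  let e₂ : {j : Fin (2 * n) // ¬ j.val < 2 * t} ≃ {j : Fin (2 * n) // ¬ p j} :=
    Fintype.equivOfCardEq hcard1'
  let σ₀ : Equiv.Perm (Fin (2 * n)) :=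
    (Equiv.sumCompl (fun j : Fin (2 * n) => j.val < 2 * t)).symm.trans
      ((e₁.sumCongr e₂).trans (Equiv.sumCompl p))
  have hσ₀ : ∀ j : Fin (2 * n), p (σ₀ j) ↔ j.val < 2 * t := by
    intro j
    by_cases h : j.val < 2 * t
    · have : σ₀ j = (e₁ ⟨j, h⟩).val := sigma_pos p e₁ e₂ j h
      rw [this]
      simp [h, (e₁ ⟨j, h⟩).property]
    · have : σ₀ j = (e₂ ⟨j, h⟩).val := sigma_neg p e₁ e₂ j h
      rw [this]
      simp [h, (e₂ ⟨j, h⟩).property]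
  refine ⟨σ₀, ?_⟩
  simp only [good, mem_filter, mem_univ, true_and]
  intro k
  rw [hσ₀, hσ₀]
  simp only [dk, dk']
  omega

private lemma hafSub_eq (n : ℕ) (lam : Fin (4 * n) → Fin (4 * n) → ℝ)
    (h : Fin (2 * n) → Fin (4 * n)) :
    hafSub n lam h = (1 / ((2 : ℝ) ^ n * (Nat.factorial n : ℝ))) *
      ∑ σ : Equiv.Perm (Fin (2 * n)), ∏ k : Fin n,
        lam (h (σ (dk k))) (h (σ (dk' k))) := rfl

/-- For the pure curvature eigenvalues of a product of two 2n-dimensional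
space forms (λᵢⱼ = −c₁ on the first block, −c₂ on the second block, 0 on cross pairs,
c₁c₂ ≠ 0), and a 2n-subset I (enumerated injectively by f, with complement enumerated
by g) containing r indices from the first block: if r is odd then haf(I) = haf(Iᶜ) = 0,
and if r = 2s then haf(I) = haf(Iᶜ) iff c₁ˢc₂ⁿ⁻ˢ = c₁ⁿ⁻ˢc₂ˢ. -/
theorem stmt_18 (n : ℕ) (hn : 2 ≤ n) (c₁ c₂ : ℝ) (hc₁ : c₁ ≠ 0) (hc₂ : c₂ ≠ 0)
    (lam : Fin (4 * n) → Fin (4 * n) → ℝ)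
    (hlam : ∀ i j : Fin (4 * n), lam i j =
      if i.val < 2 * n ∧ j.val < 2 * n then -c₁
      else if 2 * n ≤ i.val ∧ 2 * n ≤ j.val then -c₂ else 0)
    (f g : Fin (2 * n) → Fin (4 * n))
    (hf : Function.Injective f) (hg : Function.Injective g)
    (hfg : Set.range g = (Set.range f)ᶜ)
    (r : ℕ) (hr : r = (Finset.univ.filter (fun k => (f k).val < 2 * n)).card) :
    (Odd r → hafSub n lam f = 0 ∧ hafSub n lam g = 0) ∧
    (∀ s : ℕ, r = 2 * s →
      (hafSub n lam f = hafSub n lam g ↔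
        c₁ ^ s * c₂ ^ (n - s) = c₁ ^ (n - s) * c₂ ^ s)) := by
  -- value hypotheses
  have hvf : ∀ a b : Fin (2 * n), lam (f a) (f b) =
      if ((f a).val < 2 * n) ∧ ((f b).val < 2 * n) then -c₁
      else if ¬((f a).val < 2 * n) ∧ ¬((f b).val < 2 * n) then -c₂ else 0 := by
    intro a b; rw [hlam]; simp [not_lt]
  have hvg : ∀ a b : Fin (2 * n), lam (g a) (g b) =
      if ((g a).val < 2 * n) ∧ ((g b).val < 2 * n) then -c₁
      else if ¬((g a).val < 2 * n) ∧ ¬((g b).val < 2 * n) then -c₂ else 0 := by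
    intro a b; rw [hlam]; simp [not_lt]
  -- cardinalities
  have hpf : (univ.filter fun j : Fin (2 * n) => (f j).val < 2 * n).card = r := hr.symm
  have hkey : ((univ.filter fun j : Fin (2 * n) => (f j).val < 2 * n).image f) ∪
      ((univ.filter fun j : Fin (2 * n) => (g j).val < 2 * n).image g) =
      univ.filter (fun i : Fin (4 * n) => i.val < 2 * n) := by
    ext i
    simp only [mem_union, mem_image, mem_filter, mem_univ, true_and]
    constructor
    · rintro (⟨j, hj, rfl⟩ | ⟨j, hj, rfl⟩) <;> exact hj
    · intro hi
      by_cases hfi : i ∈ Set.range f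
      · obtain ⟨j, rfl⟩ := hfi; exact Or.inl ⟨j, hi, rfl⟩
      · have : i ∈ Set.range g := by rw [hfg]; exact hfi
        obtain ⟨j, rfl⟩ := this; exact Or.inr ⟨j, hi, rfl⟩
  have hdisj : Disjoint ((univ.filter fun j : Fin (2 * n) => (f j).val < 2 * n).image f)
      ((univ.filter fun j : Fin (2 * n) => (g j).val < 2 * n).image g) := by
    rw [Finset.disjoint_left]
    rintro i hif hig
    simp only [mem_image, mem_filter, mem_univ, true_and] at hif hig
    obtain ⟨j, -, rfl⟩ := hif
    obtain ⟨j', -, hj'⟩ := hig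
    have : g j' ∈ Set.range g := ⟨j', rfl⟩
    rw [hfg, hj'] at this
    exact this ⟨j, rfl⟩
  have hsum : r + (univ.filter fun j : Fin (2 * n) => (g j).val < 2 * n).card = 2 * n := by
    have h1 := Finset.card_union_of_disjoint hdisj
    rw [hkey] at h1
    rw [Finset.card_image_of_injective _ hf, Finset.card_image_of_injective _ hg] at h1
    rw [card_filter_lt (4 * n) (2 * n) (by omega)] at h1
    omega
  have hrle : r ≤ 2 * n := by omega
  have hqg : (univ.filter fun j : Fin (2 * n) => (g j).val < 2 * n).card = 2 * n - r := by
    omega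
  -- the swapping permutation π
  have hcard1 : Fintype.card {j : Fin (2 * n) // (f j).val < 2 * n} = r := by
    rw [Fintype.card_subtype]; exact hpf
  have hcard2 : Fintype.card {j : Fin (2 * n) // (g j).val < 2 * n} = 2 * n - r := by
    rw [Fintype.card_subtype]; exact hqg
  have hc1' : Fintype.card {j : Fin (2 * n) // ¬ (g j).val < 2 * n} = r := by
    rw [Fintype.card_subtype_compl, hcard2, Fintype.card_fin]; omega
  have hc2' : Fintype.card {j : Fin (2 * n) // ¬ (f j).val < 2 * n} = 2 * n - r := by
    rw [Fintype.card_subtype_compl, hcard1, Fintype.card_fin]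
  let e₁ : {j : Fin (2 * n) // (f j).val < 2 * n} ≃ {j : Fin (2 * n) // ¬ (g j).val < 2 * n} :=
    Fintype.equivOfCardEq (by rw [hcard1, hc1'])
  let e₂ : {j : Fin (2 * n) // ¬ (f j).val < 2 * n} ≃ {j : Fin (2 * n) // (g j).val < 2 * n} :=
    Fintype.equivOfCardEq (by rw [hc2', hcard2])
  let π : Equiv.Perm (Fin (2 * n)) :=
    (Equiv.sumCompl (fun j : Fin (2 * n) => (f j).val < 2 * n)).symm.trans
      ((e₁.sumCongr e₂).trans ((Equiv.sumComm _ _).trans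
        (Equiv.sumCompl (fun j : Fin (2 * n) => (g j).val < 2 * n))))
  have hπ : ∀ j : Fin (2 * n), ((g (π j)).val < 2 * n ↔ ¬ (f j).val < 2 * n) := by
    intro j
    by_cases h : (f j).val < 2 * n
    · have hj : π j = (e₁ ⟨j, h⟩).val := by
        have e := Equiv.sumCompl_symm_apply_of_pos
          (p := fun j : Fin (2 * n) => (f j).val < 2 * n) (a := j) h
        simp only [π, Equiv.trans_apply, e, Equiv.sumCongr_apply, Sum.map_inl,
          Equiv.sumComm_apply, Sum.swap_inl, Equiv.sumCompl_apply_inr]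
      rw [hj]
      have := (e₁ ⟨j, h⟩).property
      simp [h, this]
    · have hj : π j = (e₂ ⟨j, h⟩).val := by
        have e := Equiv.sumCompl_symm_apply_of_neg
          (p := fun j : Fin (2 * n) => (f j).val < 2 * n) (a := j) h
        simp only [π, Equiv.trans_apply, e, Equiv.sumCongr_apply, Sum.map_inr,
          Equiv.sumComm_apply, Sum.swap_inr, Equiv.sumCompl_apply_inl]
      rw [hj]
      have := (e₂ ⟨j, h⟩).property
      simp [h, this]
  have hNg : (good n fun j : Fin (2 * n) => (g j).val < 2 * n).card =
      (good n fun j : Fin (2 * n) => (f j).val < 2 * n).card := by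
    rw [← good_comp (fun j : Fin (2 * n) => (g j).val < 2 * n) π]
    rw [good_congr hπ, good_neg]
  constructor
  · -- odd case
    intro hodd
    constructor
    · rw [hafSub_eq, sum_odd hvf (by rw [hpf]; exact hodd), mul_zero]
    · have hoddg : Odd (univ.filter fun j : Fin (2 * n) => (g j).val < 2 * n).card := by
        rw [hqg, Nat.odd_iff]
        rw [Nat.odd_iff] at hodd
        omega
      rw [hafSub_eq, sum_odd hvg hoddg, mul_zero]
  · -- even case
    intro s hs
    have hsn : s ≤ n := by omega
    have htf : (univ.filter fun j : Fin (2 * n) => (f j).val < 2 * n).card = 2 * s := by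
      rw [hpf, hs]
    have htg : (univ.filter fun j : Fin (2 * n) => (g j).val < 2 * n).card = 2 * (n - s) := by
      rw [hqg]; omega
    rw [hafSub_eq, hafSub_eq, sum_eval hvf s htf, sum_eval hvg (n - s) htg, hNg]
    have hnn : n - (n - s) = s := by omega
    rw [hnn]
    have hN : ((good n fun j : Fin (2 * n) => (f j).val < 2 * n).card : ℝ) ≠ 0 := by
      have := good_nonempty (fun j : Fin (2 * n) => (f j).val < 2 * n) s htf
      have := Finset.card_pos.mpr this
      positivity
    have hC : (1 / ((2 : ℝ) ^ n * (Nat.factorial n : ℝ))) ≠ 0 := by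
      have h1 : ((Nat.factorial n : ℝ)) ≠ 0 := Nat.cast_ne_zero.mpr (Nat.factorial_ne_zero n)
      positivity
    have hrw : ∀ a b : ℝ, ∀ u : ℕ, u ≤ n →
        (-a) ^ u * (-b) ^ (n - u) = (-1 : ℝ) ^ n * (a ^ u * b ^ (n - u)) := by
      intro a b u hu
      rw [show (-a : ℝ) = (-1) * a by ring, show (-b : ℝ) = (-1) * b by ring,
        mul_pow, mul_pow,
        show ((-1 : ℝ) ^ u * a ^ u) * ((-1 : ℝ) ^ (n - u) * b ^ (n - u)) =
          ((-1 : ℝ) ^ u * (-1 : ℝ) ^ (n - u)) * (a ^ u * b ^ (n - u)) by ring,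
        ← pow_add, show u + (n - u) = n by omega]
    have hrw2 : ∀ a b : ℝ, ∀ u : ℕ, u ≤ n →
        (-a) ^ (n - u) * (-b) ^ u = (-1 : ℝ) ^ n * (a ^ (n - u) * b ^ u) := by
      intro a b u hu
      rw [show (-a : ℝ) = (-1) * a by ring, show (-b : ℝ) = (-1) * b by ring,
        mul_pow, mul_pow,
        show ((-1 : ℝ) ^ (n - u) * a ^ (n - u)) * ((-1 : ℝ) ^ u * b ^ u) =
          ((-1 : ℝ) ^ (n - u) * (-1 : ℝ) ^ u) * (a ^ (n - u) * b ^ u) by ring,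
        ← pow_add, show (n - u) + u = n by omega]
    rw [hrw c₁ c₂ s hsn, hrw2 c₁ c₂ s hsn,
      mul_right_inj' hC, mul_right_inj' hN,
      mul_right_inj' (by norm_num : ((-1 : ℝ) ^ n) ≠ 0)]
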